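/- Let n ≥ 1 and 1 ≤ t ≤ n. In the symmetric group S_{n+1}, with simple reflections s_r := (r, r+1) for 1 ≤ r ≤ n, let w := s_{i_1} s_{i_2} ⋯ s_{i_N} be the product of the simple reflections indexed by the word 𝐢 of rectangle residues. Then: (i) the number of inversions of w equals N = t(n−t+1), so the word 𝐢 is a reduced expression of w; (ii) w = w_J w_∘, where w_∘ is the longest element of S_{n+1} (the order-reversing permutation) and w_J is the longest element of the parabolic subgroup generated by {s_r : 1 ≤ r ≤ n, r ≠ t}; (iii) w is the unique element of maximal length among all v ∈ S_{n+1} satisfying ℓ(s_r v) > ℓ(v) for every r ≠ t, i.e. w is the longest minimal-length representative of the cosets W_J\S_{n+1}. -/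

import Mathlib

namespace Stmt12

/-- Row index (1-indexed) of the box labeled `p` in the `t × U` rectangle. -/
def ibox (U p : ℕ) : ℕ := (p - 1) / U + 1

/-- Column index (1-indexed) of the box labeled `p`. -/
def jbox (U p : ℕ) : ℕ := (p - 1) % U + 1

/-- The word `i_p = res(i^p, j^p) = t - i^p + j^p` of rectangle residues. -/
def iword (t U p : ℕ) : ℕ := t + jbox U p - ibox U p

open Fin.NatCast in
/-- The simple reflection `s_r = (r, r+1)` (1-indexed) in `S_{n+1}`. -/
def srefl (n r : ℕ) : Equiv.Perm (Fin (n + 1)) :=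
  Equiv.swap ((r - 1 : ℕ) : Fin (n + 1)) ((r : ℕ) : Fin (n + 1))

/-- `w = s_{i_1} s_{i_2} ⋯ s_{i_N}`, `N = t(n-t+1)`. -/
def wrd (n t : ℕ) : Equiv.Perm (Fin (n + 1)) :=
  ((List.range (t * (n - t + 1))).map fun a => srefl n (iword t (n - t + 1) (a + 1))).prod

/-- The number of inversions of a permutation (its Coxeter length in `S_{n+1}`). -/
def invCount (n : ℕ) (σ : Equiv.Perm (Fin (n + 1))) : ℕ :=
  (Finset.univ.filter fun pq : Fin (n + 1) × Fin (n + 1) =>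
    pq.1 < pq.2 ∧ σ pq.2 < σ pq.1).card

/-- The order-reversing permutation, i.e. the longest element `w_∘` of `S_{n+1}`. -/
def wRev (n : ℕ) : Equiv.Perm (Fin (n + 1)) :=
  ⟨Fin.rev, Fin.rev, fun x => Fin.rev_rev x, fun x => Fin.rev_rev x⟩

/-- The parabolic subgroup of `S_{n+1}` generated by `{s_r : 1 ≤ r ≤ n, r ≠ t}`. -/
def parab (n t : ℕ) : Subgroup (Equiv.Perm (Fin (n + 1))) :=
  Subgroup.closure {σ | ∃ r, 1 ≤ r ∧ r ≤ n ∧ r ≠ t ∧ σ = srefl n r}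

open Fin.NatCast in
lemma cast_mk {n : ℕ} (x : ℕ) (h : x < n + 1) : ((x : ℕ) : Fin (n + 1)) = ⟨x, h⟩ :=
  Fin.ext (Fin.val_cast_of_lt h)

lemma invCount_inv (n : ℕ) (σ : Equiv.Perm (Fin (n + 1))) :
    invCount n σ⁻¹ = invCount n σ := by
  unfold invCount
  apply Finset.card_bij' (fun pq _ => (σ⁻¹ pq.2, σ⁻¹ pq.1)) (fun pq _ => (σ pq.2, σ pq.1))
  · intro pq h
    simp only [Finset.mem_filter, Finset.mem_univ, true_and] at h ⊢
    exact ⟨h.2, by simpa using h.1⟩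
  · intro pq h
    simp only [Finset.mem_filter, Finset.mem_univ, true_and] at h ⊢
    exact ⟨h.2, by simpa using h.1⟩
  · intro pq h; simp
  · intro pq h; simp

lemma srefl_eq (n x : ℕ) (hx : x + 1 ≤ n) :
    srefl n (x + 1) = Equiv.swap (⟨x, by omega⟩ : Fin (n + 1)) ⟨x + 1, by omega⟩ := by
  unfold srefl
  rw [Nat.add_sub_cancel, cast_mk x (by omega), cast_mk (x+1) (by omega)]

/-- order lemma: adjacent swap preserves order on all pairs except (x, x+1) itself -/
lemma swap_order {n : ℕ} (x : ℕ) (hx : x + 1 ≤ n) (p q : Fin (n + 1))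
    (hpq : p < q) (hne : ¬(p = (⟨x, by omega⟩ : Fin (n+1)) ∧ q = (⟨x+1, by omega⟩ : Fin (n+1)))) :
    Equiv.swap (⟨x, by omega⟩ : Fin (n + 1)) (⟨x+1, by omega⟩ : Fin (n+1)) p
      < Equiv.swap (⟨x, by omega⟩ : Fin (n + 1)) (⟨x+1, by omega⟩ : Fin (n+1)) q := by
  simp only [Equiv.swap_apply_def]
  split_ifs <;>
    simp only [Fin.ext_iff, Fin.lt_def, not_and] at * <;> omega

lemma invCount_mul_srefl (n : ℕ) (σ : Equiv.Perm (Fin (n + 1))) (x : ℕ) (hx : x + 1 ≤ n)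
    (h : σ ⟨x, by omega⟩ < σ ⟨x + 1, by omega⟩) :
    invCount n (σ * srefl n (x + 1)) = invCount n σ + 1 := by
  rw [srefl_eq n x hx]
  set a : Fin (n+1) := ⟨x, by omega⟩ with ha
  set b : Fin (n+1) := ⟨x+1, by omega⟩ with hb
  set s := Equiv.swap a b with hs
  have hsa : s a = b := Equiv.swap_apply_left a b
  have hsb : s b = a := Equiv.swap_apply_right a b
  have hss : ∀ y, s (s y) = y := fun y => Equiv.swap_apply_self a b y
  have hab : a < b := by simp [ha, hb, Fin.lt_def]
  unfold invCount
  have key : (Finset.univ.filter fun pq : Fin (n + 1) × Fin (n + 1) =>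
      pq.1 < pq.2 ∧ (σ * s) pq.2 < (σ * s) pq.1)
      = insert (a, b) ((Finset.univ.filter fun pq : Fin (n + 1) × Fin (n + 1) =>
      pq.1 < pq.2 ∧ σ pq.2 < σ pq.1).image fun pq => (s pq.1, s pq.2)) := by
    ext ⟨p, q⟩
    simp only [Finset.mem_insert, Finset.mem_image, Finset.mem_filter, Finset.mem_univ,
      true_and]
    simp only [Equiv.Perm.mul_apply, Prod.mk.injEq, Prod.ext_iff]
    constructor
    · rintro ⟨h1, h2⟩
      by_cases hc : p = a ∧ q = b
      · exact Or.inl hc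
      · refine Or.inr ⟨(s p, s q), ⟨?_, ?_⟩, by simp [hss]⟩
        · exact swap_order x hx p q h1 hc
        · simpa [hss] using h2
    · rintro (⟨hp, hq⟩ | ⟨⟨p', q'⟩, ⟨h1, h2⟩, hp, hq⟩)
      · subst hp; subst hq
        exact ⟨hab, by simpa [hsa, hsb] using h⟩
      · subst hp; subst hq
        have hne : ¬(p' = a ∧ q' = b) := by
          rintro ⟨rfl, rfl⟩
          exact absurd h (not_lt.mpr (le_of_lt h2))
        exact ⟨swap_order x hx p' q' h1 hne, by simpa [hss] using h2⟩
  rw [key]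
  rw [Finset.card_insert_of_notMem, Finset.card_image_of_injective]
  · intro u v huv
    have huv' : (s u.1, s u.2) = (s v.1, s v.2) := huv
    simp only [Prod.mk.injEq] at huv'
    exact Prod.ext (s.injective huv'.1) (s.injective huv'.2)
  · simp only [Finset.mem_image, Finset.mem_filter, Finset.mem_univ, true_and, Prod.ext_iff]
    rintro ⟨⟨p', q'⟩, ⟨h1, _⟩, hp, hq⟩
    have hp' : p' = b := s.injective (by rw [hp, ← hsb])
    have hq' : q' = a := s.injective (by rw [hq, ← hsa])
    rw [hp', hq'] at h1
    exact absurd h1 (not_lt.mpr (le_of_lt hab))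

lemma invCount_mul_srefl_dec (n : ℕ) (σ : Equiv.Perm (Fin (n + 1))) (x : ℕ) (hx : x + 1 ≤ n)
    (h : σ ⟨x + 1, by omega⟩ < σ ⟨x, by omega⟩) :
    invCount n (σ * srefl n (x + 1)) + 1 = invCount n σ := by
  have hs := srefl_eq n x hx
  rw [hs]
  have key := invCount_mul_srefl n (σ * Equiv.swap (⟨x, by omega⟩ : Fin (n+1)) ⟨x + 1, by omega⟩) x hx (by
    simp only [Equiv.Perm.mul_apply, Equiv.swap_apply_left, Equiv.swap_apply_right]
    exact h)
  rw [mul_assoc, hs, Equiv.swap_mul_self, mul_one] at key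
  omega

lemma invCount_srefl_mul (n : ℕ) (σ : Equiv.Perm (Fin (n + 1))) (x : ℕ) (hx : x + 1 ≤ n)
    (h : σ⁻¹ ⟨x, by omega⟩ < σ⁻¹ ⟨x + 1, by omega⟩) :
    invCount n (srefl n (x + 1) * σ) = invCount n σ + 1 := by
  have h1 : (srefl n (x+1) * σ)⁻¹ = σ⁻¹ * srefl n (x+1) := by
    rw [mul_inv_rev, srefl_eq n x hx, Equiv.swap_inv]
  rw [← invCount_inv, h1, invCount_mul_srefl n σ⁻¹ x hx h, invCount_inv]

lemma invCount_srefl_mul_dec (n : ℕ) (σ : Equiv.Perm (Fin (n + 1))) (x : ℕ) (hx : x + 1 ≤ n)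
    (h : σ⁻¹ ⟨x + 1, by omega⟩ < σ⁻¹ ⟨x, by omega⟩) :
    invCount n (srefl n (x + 1) * σ) + 1 = invCount n σ := by
  have h1 : (srefl n (x+1) * σ)⁻¹ = σ⁻¹ * srefl n (x+1) := by
    rw [mul_inv_rev, srefl_eq n x hx, Equiv.swap_inv]
  rw [← invCount_inv, h1, invCount_mul_srefl_dec n σ⁻¹ x hx h, invCount_inv]
lemma le_apply_of_strictMono {m : ℕ} {f : Fin m → Fin m} (hf : StrictMono f) :
    ∀ x, x ≤ f x := by
  intro x
  rcases x with ⟨xv, hxv⟩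
  induction xv with
  | zero => simp [Fin.le_def]
  | succ k ih =>
      have hk : k < m := by omega
      have h1 := ih hk
      have h2 : f ⟨k, hk⟩ < f ⟨k+1, hxv⟩ := hf (by simp [Fin.lt_def])
      simp only [Fin.le_def, Fin.lt_def] at *
      omega

lemma strictMono_fin_id {m : ℕ} {f : Fin m → Fin m} (hf : StrictMono f) :
    ∀ x, f x = x := by
  intro x
  have h1 : x ≤ f x := le_apply_of_strictMono hf x
  have hg : StrictMono (fun y : Fin m => (f y.rev).rev) := by
    intro a b hab
    simp only [Fin.rev_lt_rev]
    exact hf (Fin.rev_lt_rev.mpr hab)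
  have h2 := le_apply_of_strictMono hg x.rev
  simp only [Fin.rev_rev] at h2
  have h3 : f x ≤ x := by
    have := Fin.rev_le_rev.mp (by simpa using h2)
    simpa using this
  exact le_antisymm h3 h1

lemma strictMono_of_adjacent {m : ℕ} {f : Fin (m + 1) → Fin (m + 1)}
    (h : ∀ i : ℕ, (hi : i + 1 ≤ m) → f ⟨i, by omega⟩ < f ⟨i + 1, by omega⟩) :
    StrictMono f := by
  have key : ∀ k : ℕ, ∀ a b : Fin (m + 1), a.val < b.val → b.val ≤ k → f a < f b := by
    intro k
    induction k with
    | zero => intro a b h1 h2; omega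
    | succ k ih =>
        intro a b h1 h2
        have hb : b = ⟨b.val, b.isLt⟩ := Fin.ext rfl
        by_cases hc : b.val = a.val + 1
        · have ha' : a = ⟨a.val, a.isLt⟩ := Fin.ext rfl
          have := h a.val (by omega)
          convert this using 2 <;> simp [Fin.ext_iff] <;> omega
        · have h3 : f a < f ⟨b.val - 1, by omega⟩ := ih a _ (by simp; omega) (by simp; omega)
          have h4 : f ⟨b.val - 1, by omega⟩ < f b := by
            have := h (b.val - 1) (by omega)
            convert this using 2 <;> simp [Fin.ext_iff] <;> omega
          exact h3.trans h4
  intro a b hab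
  exact key m a b hab (by omega)
lemma consec_prod_apply (n : ℕ) : ∀ (len a : ℕ), 1 ≤ a → a - 1 + len ≤ n →
    ∀ x : Fin (n + 1),
    (((List.range len).map fun c => srefl n (a + c)).prod x).val =
      if x.val < a - 1 then x.val
      else if x.val < a - 1 + len then x.val + 1
      else if x.val = a - 1 + len then a - 1
      else x.val := by
  intro len
  induction len with
  | zero =>
      intro a ha hle x
      simp only [List.range_zero, List.map_nil, List.prod_nil, Equiv.Perm.one_apply]
      split_ifs <;> omega
  | succ len ih =>
      intro a ha hle x
      rw [List.range_succ, List.map_append, List.prod_append, List.map_singleton,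
        List.prod_singleton]
      rw [Equiv.Perm.mul_apply]
      have hal : a + len ≤ n := by omega
      have hsr : srefl n (a + len) = Equiv.swap (⟨a + len - 1, by omega⟩ : Fin (n+1)) ⟨a + len, by omega⟩ := by
        unfold srefl
        rw [cast_mk (a + len - 1) (by omega), cast_mk (a + len) (by omega)]
      rw [hsr]
      rw [ih a ha (by omega) (Equiv.swap (⟨a + len - 1, by omega⟩ : Fin (n+1)) ⟨a + len, by omega⟩ x)]
      simp only [Equiv.swap_apply_def, apply_ite Fin.val, Fin.ext_iff]
      have hxn := x.isLt
      split_ifs <;> omega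


lemma W_formula (n t : ℕ) (ht1 : 1 ≤ t) (htn : t ≤ n) :
    ∀ (m : ℕ), m ≤ t → ∀ x : Fin (n + 1),
    ((((List.range (m * (n - t + 1))).map fun e => srefl n (iword t (n - t + 1) (e + 1))).prod) x).val =
      if x.val < t - m then x.val
      else if x.val + m ≤ n then x.val + m
      else x.val + t - (n + 1) := by
  intro m
  induction m with
  | zero =>
      intro hm x
      simp only [Nat.zero_mul, List.range_zero, List.map_nil, List.prod_nil,
        Equiv.Perm.one_apply]
      have hxn := x.isLt
      split_ifs <;> omega
  | succ m ih =>
      intro hm x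
      set U := n - t + 1 with hU
      have hUpos : 0 < U := by omega
      have hsplit : List.range ((m + 1) * U) = List.range (m * U) ++ (List.range U).map (m * U + ·) := by
        have : (m + 1) * U = m * U + U := by ring
        rw [this, List.range_add]
      rw [hsplit, List.map_append, List.prod_append, List.map_map]
      have hrow : ((List.range U).map ((fun e => srefl n (iword t U (e + 1))) ∘ (m * U + ·)))
          = (List.range U).map fun c => srefl n (t - m + c) := by
        apply List.map_congr_left
        intro c hc
        rw [List.mem_range] at hc
        simp only [Function.comp_apply]
        congr 1
        unfold iword ibox jbox
        have h1 : m * U + c + 1 - 1 = U * m + c := by ring_nf; omega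
        rw [h1, Nat.mul_add_div hUpos, Nat.mul_add_mod]
        rw [Nat.div_eq_of_lt hc, Nat.mod_eq_of_lt hc]
        omega
      rw [hrow, Equiv.Perm.mul_apply]
      have hrowval := consec_prod_apply n U (t - m) (by omega) (by omega) x
      rw [ih (by omega)]
      have hxn := x.isLt
      split_ifs at hrowval ⊢ <;> omega


lemma wrd_val (n t : ℕ) (ht1 : 1 ≤ t) (htn : t ≤ n) (x : Fin (n + 1)) :
    ((wrd n t) x).val = if x.val + t ≤ n then x.val + t else x.val + t - (n + 1) := by
  have := W_formula n t ht1 htn t (le_refl t) x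
  unfold wrd
  rw [this]
  have hxn := x.isLt
  split_ifs <;> omega

lemma wrd_inv_val (n t : ℕ) (ht1 : 1 ≤ t) (htn : t ≤ n) (y : Fin (n + 1)) :
    ((wrd n t)⁻¹ y).val =
      if y.val + (n + 1 - t) ≤ n then y.val + (n + 1 - t) else y.val - t := by
  have h := wrd_val n t ht1 htn ((wrd n t)⁻¹ y)
  rw [show (wrd n t) ((wrd n t)⁻¹ y) = y from (wrd n t).apply_symm_apply y] at h
  have h1 := ((wrd n t)⁻¹ y).isLt
  have h2 := y.isLt
  split_ifs at h ⊢ <;> omega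

lemma card_cross (n k : ℕ) (hk : k ≤ n + 1) :
    (Finset.univ.filter fun pq : Fin (n + 1) × Fin (n + 1) =>
      pq.1.val < k ∧ k ≤ pq.2.val).card = k * (n + 1 - k) := by
  rw [← Finset.univ_product_univ,
    Finset.filter_product (fun a : Fin (n+1) => a.val < k) (fun b : Fin (n+1) => k ≤ b.val),
    Finset.card_product]
  have hL : (Finset.univ.filter fun p : Fin (n + 1) => p.val < k).card = k := by
    rw [show k = (Finset.range k).card from (Finset.card_range k).symm]
    apply Finset.card_nbij (fun p => p.val)
    · intro p hp
      simp only [Finset.coe_filter, Set.mem_setOf_eq] at hp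
      simpa using hp.2
    · intro p _ q _ h; exact Fin.ext h
    · intro m hm
      simp only [Finset.coe_range, Set.mem_Iio] at hm
      exact ⟨⟨m, by omega⟩, by simp [hm], rfl⟩
  have hR : (Finset.univ.filter fun q : Fin (n + 1) => k ≤ q.val).card = n + 1 - k := by
    have := Finset.card_filter_add_card_filter_not (s := (Finset.univ : Finset (Fin (n+1))))
      (p := fun p : Fin (n + 1) => p.val < k)
    simp only [not_lt, Finset.card_univ, Fintype.card_fin] at this
    omega
  rw [hL, hR]

/-- block-preserving predicate -/
def Hblock (n t : ℕ) (σ : Equiv.Perm (Fin (n + 1))) : Prop :=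
  ∀ x : Fin (n + 1), (σ x).val < t ↔ x.val < t

lemma hblock_srefl (n t r : ℕ) (h1 : 1 ≤ r) (h2 : r ≤ n) (h3 : r ≠ t) :
    Hblock n t (srefl n r) := by
  intro x
  unfold srefl
  rw [cast_mk (r - 1) (by omega), cast_mk r (by omega), Equiv.swap_apply_def]
  split_ifs <;> simp_all [Fin.ext_iff] <;> omega

lemma hblock_of_parab (n t : ℕ) (v : Equiv.Perm (Fin (n + 1))) (hv : v ∈ parab n t) :
    Hblock n t v := by
  unfold parab at hv
  induction hv using Subgroup.closure_induction with
  | mem σ hσ =>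
      obtain ⟨r, h1, h2, h3, rfl⟩ := hσ
      exact hblock_srefl n t r h1 h2 h3
  | one => intro x; simp
  | mul σ τ _ _ hσ hτ =>
      intro x
      rw [Equiv.Perm.mul_apply, hσ (τ x), hτ x]
  | inv σ _ hσ =>
      intro x
      have h2 := hσ (σ⁻¹ x)
      rw [show σ (σ⁻¹ x) = x from σ.apply_symm_apply x] at h2
      exact h2.symm

lemma descent_exists (n : ℕ) (σ : Equiv.Perm (Fin (n + 1))) (hσ : σ ≠ 1) :
    ∃ i : ℕ, ∃ hi : i + 1 ≤ n, σ ⟨i + 1, by omega⟩ < σ ⟨i, by omega⟩ := by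
  by_contra hc
  push_neg at hc
  have hmono : StrictMono σ := by
    apply strictMono_of_adjacent
    intro i hi
    rcases lt_or_ge (σ ⟨i, by omega⟩) (σ ⟨i + 1, by omega⟩) with h | h
    · exact h
    · rcases lt_or_eq_of_le h with h' | h'
      · exact absurd h' (not_lt.mpr (hc i hi))
      · exact absurd (σ.injective h') (by simp [Fin.ext_iff])
  exact hσ (Equiv.ext fun x => strictMono_fin_id hmono x)

lemma mem_parab_of_hblock (n t : ℕ) (ht1 : 1 ≤ t) (htn : t ≤ n) :
    ∀ (k : ℕ) (σ : Equiv.Perm (Fin (n + 1))), invCount n σ = k → Hblock n t σ →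
      σ ∈ parab n t := by
  intro k
  induction k using Nat.strong_induction_on with
  | _ k ih =>
      intro σ hk hσ
      by_cases h1 : σ = 1
      · rw [h1]; exact Subgroup.one_mem _
      · obtain ⟨i, hi, hdesc⟩ := descent_exists n σ h1
        have hrt : i + 1 ≠ t := by
          intro he
          have h2 := (hσ ⟨i, by omega⟩).mpr (by simp; omega)
          have h3 : ¬ (σ ⟨i + 1, by omega⟩).val < t := by
            rw [hσ ⟨i + 1, by omega⟩]; simp; omega
          rw [Fin.lt_def] at hdesc
          omega
        have hdec := invCount_mul_srefl_dec n σ i hi hdesc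
        have hmem : srefl n (i + 1) ∈ parab n t :=
          Subgroup.subset_closure ⟨i + 1, by omega, by omega, hrt, rfl⟩
        have hblk : Hblock n t (σ * srefl n (i + 1)) := by
          intro x
          rw [Equiv.Perm.mul_apply, hσ, hblock_srefl n t (i + 1) (by omega) (by omega) hrt]
        have hmem2 : σ * srefl n (i + 1) ∈ parab n t :=
          ih (invCount n (σ * srefl n (i + 1))) (by omega) _ rfl hblk
        have : σ = (σ * srefl n (i + 1)) * srefl n (i + 1) := by
          rw [mul_assoc]
          rw [srefl_eq n i hi, Equiv.swap_mul_self, mul_one]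
        rw [this]
        exact Subgroup.mul_mem _ hmem2 hmem

/-- chain monotonicity within blocks -/
lemma mono_chain (n t : ℕ) (u : Fin (n + 1) → Fin (n + 1))
    (h : ∀ i : ℕ, (hi : i + 1 ≤ n) → i + 1 ≠ t → u ⟨i, by omega⟩ < u ⟨i + 1, by omega⟩)
    (p q : Fin (n + 1)) (hpq : p.val < q.val) (hblk : q.val < t ∨ t ≤ p.val) :
    u p < u q := by
  have key : ∀ (k : ℕ) (p q : Fin (n + 1)), p.val < q.val → (q.val < t ∨ t ≤ p.val) →
      q.val ≤ k → u p < u q := by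
    intro k
    induction k with
    | zero => intro p q h1 _ h2; omega
    | succ k ih =>
        intro p q h1 h2 h3
        by_cases hc : q.val = p.val + 1
        · have ht' : p.val + 1 ≠ t := by omega
          have := h p.val (by omega) ht'
          have hp' : (⟨p.val, by omega⟩ : Fin (n+1)) = p := Fin.ext rfl
          have hq' : (⟨p.val + 1, by omega⟩ : Fin (n+1)) = q := Fin.ext (by simp; omega)
          rwa [hp', hq'] at this
        · have h4 : u p < u ⟨q.val - 1, by omega⟩ :=
            ih p ⟨q.val - 1, by omega⟩ (by simp; omega) (by simp; omega) (by simp; omega)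
          have h5 : u ⟨q.val - 1, by omega⟩ < u q := by
            have ht' : q.val ≠ t := by omega
            have := h (q.val - 1) (by omega) (by omega)
            have hq' : (⟨q.val - 1 + 1, by omega⟩ : Fin (n+1)) = q := Fin.ext (by simp; omega)
            rwa [hq'] at this
          exact h4.trans h5
  exact key q.val p q hpq hblk (le_refl _)

theorem stmt12 (n t : ℕ) (hn : 1 ≤ n) (ht1 : 1 ≤ t) (htn : t ≤ n) :
    -- (i) `ℓ(w) = N`, so the word `𝐢` is reduced
    invCount n (wrd n t) = t * (n - t + 1) ∧
    -- (ii) `w = w_J w_∘` with `w_J` the longest element of the parabolic subgroup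
    (∃ wJ ∈ parab n t,
      (∀ v ∈ parab n t, invCount n v ≤ invCount n wJ) ∧ wrd n t = wJ * wRev n) ∧
    -- (iii) `w` is the unique longest element among the minimal-length coset
    -- representatives of `W_J \ S_{n+1}`
    ((∀ r, 1 ≤ r → r ≤ n → r ≠ t →
        invCount n (wrd n t) < invCount n (srefl n r * wrd n t)) ∧
      ∀ v : Equiv.Perm (Fin (n + 1)),
        (∀ r, 1 ≤ r → r ≤ n → r ≠ t → invCount n v < invCount n (srefl n r * v)) →
        invCount n v ≤ invCount n (wrd n t) ∧
          (invCount n v = invCount n (wrd n t) → v = wrd n t)) := by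
  have hw := wrd_val n t ht1 htn
  have hwi := wrd_inv_val n t ht1 htn
  -- Part (i)
  have part1 : invCount n (wrd n t) = t * (n - t + 1) := by
    have hset : (Finset.univ.filter fun pq : Fin (n+1) × Fin (n+1) =>
        pq.1 < pq.2 ∧ (wrd n t) pq.2 < (wrd n t) pq.1)
        = Finset.univ.filter fun pq : Fin (n+1) × Fin (n+1) =>
          pq.1.val < n - t + 1 ∧ n - t + 1 ≤ pq.2.val := by
      ext ⟨p, q⟩
      simp only [Finset.mem_filter, Finset.mem_univ, true_and, Fin.lt_def]
      have hp := hw p; have hq := hw q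
      have hpn := p.isLt; have hqn := q.isLt
      constructor
      · rintro ⟨h1, h2⟩
        rw [hp, hq] at h2
        split_ifs at h2 <;> omega
      · rintro ⟨h1, h2⟩
        refine ⟨by omega, ?_⟩
        rw [hp, hq]
        split_ifs <;> omega
    unfold invCount
    rw [hset, card_cross n (n - t + 1) (by omega)]
    have he : n + 1 - (n - t + 1) = t := by omega
    rw [he, Nat.mul_comm]
  refine ⟨part1, ?_, ?_, ?_⟩
  -- Part (ii)
  · set wJ := wrd n t * wRev n with hwJdef
    have hrevv : ∀ y : Fin (n+1), (wRev n y).val = n - y.val := by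
      intro y
      show (Fin.rev y).val = n - y.val
      rw [Fin.val_rev]
      omega
    have hJ : ∀ x : Fin (n+1), (wJ x).val =
        if x.val < t then t - 1 - x.val else n + t - x.val := by
      intro x
      show ((wrd n t) (wRev n x)).val = _
      have h := hw (wRev n x)
      rw [hrevv x] at h
      rw [h]
      have := x.isLt
      split_ifs <;> omega
    have hJblock : Hblock n t wJ := by
      intro x
      have h := hJ x
      have := x.isLt
      constructor
      · intro hh; rw [h] at hh; split_ifs at hh <;> omega
      · intro hh; rw [h, if_pos hh]; omega
    refine ⟨wJ, mem_parab_of_hblock n t ht1 htn (invCount n wJ) wJ rfl hJblock, ?_, ?_⟩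
    · intro v hv
      have hbv := hblock_of_parab n t v hv
      unfold invCount
      apply Finset.card_le_card
      intro pq hmem
      simp only [Finset.mem_filter, Finset.mem_univ, true_and, Fin.lt_def] at hmem ⊢
      obtain ⟨h1, h2⟩ := hmem
      have hp := pq.1.isLt
      have hq := pq.2.isLt
      have hsame : ¬ (pq.1.val < t ∧ t ≤ pq.2.val) := by
        rintro ⟨ha, hb⟩
        have h3 := (hbv pq.1).mpr ha
        have h4 : ¬ (v pq.2).val < t := fun hcon => by
          have := (hbv pq.2).mp hcon; omega
        omega
      refine ⟨h1, ?_⟩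
      rw [hJ pq.1, hJ pq.2]
      split_ifs <;> omega
    · rw [hwJdef, mul_assoc]
      have hrr : wRev n * wRev n = 1 := Equiv.ext fun x => Fin.rev_rev x
      rw [hrr, mul_one]
  -- Part (iii) first claim
  · intro r hr1 hrn hrt
    have hx : (r - 1) + 1 ≤ n := by omega
    have hc : (wrd n t)⁻¹ ⟨r - 1, by omega⟩ < (wrd n t)⁻¹ ⟨r - 1 + 1, by omega⟩ := by
      rw [Fin.lt_def, hwi ⟨r - 1, by omega⟩, hwi ⟨r - 1 + 1, by omega⟩]
      show (if r - 1 + (n + 1 - t) ≤ n then r - 1 + (n + 1 - t) else r - 1 - t)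
        < (if r - 1 + 1 + (n + 1 - t) ≤ n then r - 1 + 1 + (n + 1 - t) else r - 1 + 1 - t)
      split_ifs <;> omega
    have hinc := invCount_srefl_mul n (wrd n t) (r - 1) hx hc
    rw [show r - 1 + 1 = r by omega] at hinc
    omega
  -- Part (iii) second claim
  · intro v hv
    have hadj : ∀ i : ℕ, (hi : i + 1 ≤ n) → i + 1 ≠ t →
        v⁻¹ ⟨i, by omega⟩ < v⁻¹ ⟨i + 1, by omega⟩ := by
      intro i hi hit
      rcases lt_trichotomy (v⁻¹ ⟨i, by omega⟩) (v⁻¹ ⟨i + 1, by omega⟩) with h | h | h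
      · exact h
      · exact absurd (v⁻¹.injective h) (by simp [Fin.ext_iff])
      · exfalso
        have hdec := invCount_srefl_mul_dec n v i hi h
        have := hv (i + 1) (by omega) (by omega) hit
        omega
    have hsub : (Finset.univ.filter fun pq : Fin (n+1) × Fin (n+1) =>
        pq.1 < pq.2 ∧ v⁻¹ pq.2 < v⁻¹ pq.1) ⊆
        Finset.univ.filter fun pq : Fin (n+1) × Fin (n+1) =>
          pq.1.val < t ∧ t ≤ pq.2.val := by
      intro pq hpq
      simp only [Finset.mem_filter, Finset.mem_univ, true_and, Fin.lt_def] at hpq ⊢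
      obtain ⟨h1, h2⟩ := hpq
      by_cases hb : pq.1.val < t ∧ t ≤ pq.2.val
      · exact hb
      · exfalso
        have hblk : pq.2.val < t ∨ t ≤ pq.1.val := by omega
        have hm := mono_chain n t (fun y => v⁻¹ y) hadj pq.1 pq.2 h1 hblk
        rw [Fin.lt_def] at hm
        omega
    have hb1 : invCount n v ≤ t * (n - t + 1) := by
      rw [← invCount_inv]
      have hcc := card_cross n t (by omega)
      have hle : invCount n v⁻¹ ≤ t * (n + 1 - t) := by
        unfold invCount
        rw [← hcc]
        exact Finset.card_le_card hsub
      have he : n + 1 - t = n - t + 1 := by omega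
      rwa [he] at hle
    refine ⟨by omega, ?_⟩
    intro heq
    -- equality case: the inversion set of v⁻¹ is the full cross set
    have hseteq : (Finset.univ.filter fun pq : Fin (n+1) × Fin (n+1) =>
        pq.1 < pq.2 ∧ v⁻¹ pq.2 < v⁻¹ pq.1) =
        Finset.univ.filter fun pq : Fin (n+1) × Fin (n+1) =>
          pq.1.val < t ∧ t ≤ pq.2.val := by
      apply Finset.eq_of_subset_of_card_le hsub
      have hcc := card_cross n t (by omega)
      rw [hcc]
      have h5 : invCount n v⁻¹ = t * (n - t + 1) := by
        rw [invCount_inv]; omega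
      have he : n + 1 - t = n - t + 1 := by omega
      unfold invCount at h5
      rw [he, h5]
    have hcross : ∀ a b : Fin (n+1), a.val < t → t ≤ b.val → v⁻¹ b < v⁻¹ a := by
      intro a b ha hb
      have hmem : (a, b) ∈ (Finset.univ.filter fun pq : Fin (n+1) × Fin (n+1) =>
          pq.1.val < t ∧ t ≤ pq.2.val) := by
        simp only [Finset.mem_filter, Finset.mem_univ, true_and]
        exact ⟨ha, hb⟩
      rw [← hseteq] at hmem
      simp only [Finset.mem_filter, Finset.mem_univ, true_and] at hmem
      exact hmem.2
    have hmono : StrictMono (fun k : Fin (n+1) =>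
        if h : k.val < n + 1 - t then v⁻¹ ⟨t + k.val, by omega⟩
        else v⁻¹ ⟨k.val - (n + 1 - t), by omega⟩) := by
      apply strictMono_of_adjacent
      intro i hi
      simp only
      by_cases h1 : i + 1 < n + 1 - t
      · rw [dif_pos (show ((⟨i, by omega⟩ : Fin (n+1)).val < n + 1 - t) from by
            show i < n + 1 - t; omega),
          dif_pos (show ((⟨i + 1, by omega⟩ : Fin (n+1)).val < n + 1 - t) from h1)]
        exact hadj (t + i) (by omega) (by omega)
      · by_cases h2 : i + 1 = n + 1 - t
        · rw [dif_pos (show ((⟨i, by omega⟩ : Fin (n+1)).val < n + 1 - t) from by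
              show i < n + 1 - t; omega),
            dif_neg (show ¬((⟨i + 1, by omega⟩ : Fin (n+1)).val < n + 1 - t) from by
              show ¬(i + 1 < n + 1 - t); omega)]
          apply hcross
          · show i + 1 - (n + 1 - t) < t; omega
          · show t ≤ t + i; omega
        · rw [dif_neg (show ¬((⟨i, by omega⟩ : Fin (n+1)).val < n + 1 - t) from by
              show ¬(i < n + 1 - t); omega),
            dif_neg (show ¬((⟨i + 1, by omega⟩ : Fin (n+1)).val < n + 1 - t) from by
              show ¬(i + 1 < n + 1 - t); omega)]
          have hre : (⟨(⟨i + 1, by omega⟩ : Fin (n+1)).val - (n + 1 - t), by omega⟩ : Fin (n+1))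
              = ⟨(i - (n + 1 - t)) + 1, by omega⟩ :=
            Fin.ext (by show i + 1 - (n + 1 - t) = i - (n + 1 - t) + 1; omega)
          rw [hre]
          exact hadj (i - (n + 1 - t)) (by omega) (by omega)
    have hcid := strictMono_fin_id hmono
    have hfinal : v⁻¹ = (wrd n t)⁻¹ := by
      apply Equiv.ext
      intro y
      apply Fin.ext
      rw [hwi y]
      have hyn := y.isLt
      by_cases hy : y.val + (n + 1 - t) ≤ n
      · rw [if_pos hy]
        have hk : y.val + (n + 1 - t) < n + 1 := by omega
        have h1 := hcid ⟨y.val + (n + 1 - t), hk⟩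
        simp only at h1
        rw [dif_neg (show ¬((⟨y.val + (n + 1 - t), hk⟩ : Fin (n+1)).val < n + 1 - t) from by
          show ¬(y.val + (n + 1 - t) < n + 1 - t); omega)] at h1
        have h3 : v⁻¹ y = ⟨y.val + (n + 1 - t), hk⟩ := by
          rw [← h1]
          congr 1
          exact Fin.ext (by show y.val = y.val + (n + 1 - t) - (n + 1 - t); omega)
        rw [h3]
      · rw [if_neg hy]
        have hk : y.val - t < n + 1 := by omega
        have h1 := hcid ⟨y.val - t, hk⟩
        simp only at h1
        rw [dif_pos (show ((⟨y.val - t, hk⟩ : Fin (n+1)).val < n + 1 - t) from by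
          show y.val - t < n + 1 - t; omega)] at h1
        have h3 : v⁻¹ y = ⟨y.val - t, hk⟩ := by
          rw [← h1]
          congr 1
          exact Fin.ext (by show y.val = t + (y.val - t); omega)
        rw [h3]
    have : v = ((wrd n t)⁻¹)⁻¹ := by rw [← hfinal, inv_inv]
    rwa [inv_inv] at this


end Stmt12
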